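/- arXiv:1403.7759 — 5 statements merged into one kernel-verified Lean document; each statement's English description precedes it below -/
import Mathlib

section
/- For every natural number n, ∑_{k=0}^{n} (-1)^k / ((n-k)! ) * (2k+1)!! / (k! (k+1)!) equals (-1)^n / √(n! (n+1)!) * (√(n+1) * (n-1)!!/n!!)^{(-1)^n}, where (2m)!! = 2^m m! and (2m+1)!! = (2m+1)!/(2^m m!). -/
/-!
After multiplication by `2ⁿ n!` the sum becomes `∑ₖ (-1)ᵏ C(n,k) C(2k+1,k) 2ⁿ⁻ᵏ`, the coefficient
of `Xⁿ` in `(1 + X) (2X - (1 + X)²)ⁿ = (-1)ⁿ (1 + X) (1 + X²)ⁿ`, which is `(-1)ⁿ C(n, ⌊n/2⌋)`.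
Writing this binomial coefficient with double factorials gives the right-hand side; the two
parities of `n` account for the exponent `(-1)ⁿ`.
-/

open Nat Finset Polynomial

theorem coeff_one_add_X_mul_one_add_X_sq_pow (R : Type*) [CommSemiring R] (n : ℕ) :
    ((1 + X) * (1 + X ^ 2) ^ n : R[X]).coeff n = n.choose (n / 2) := by
  have hexpand : (1 + X ^ 2 : R[X]) ^ n = expand R 2 ((1 + X) ^ n) := by simp
  rcases n with _ | m
  · simp
  rw [add_mul, one_mul, coeff_add, coeff_X_mul, hexpand, coeff_expand two_pos,
    coeff_expand two_pos, coeff_one_add_X_pow, coeff_one_add_X_pow]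
  rcases Nat.even_or_odd' m with ⟨j, rfl | rfl⟩
  · simp [show ¬ 2 ∣ 2 * j + 1 by omega, show (2 * j + 1) / 2 = 2 * j / 2 by omega]
  · simp [show ¬ 2 ∣ 2 * j + 1 by omega, show 2 ∣ 2 * j + 1 + 1 by omega]

theorem sum_neg_one_pow_mul_choose_mul_choose_mul_two_pow (n : ℕ) :
    ∑ k ∈ range (n + 1), (-1 : ℤ) ^ k * n.choose k * (2 * k + 1).choose k * 2 ^ (n - k)
      = (-1) ^ n * n.choose (n / 2) := by
  have hpoly : (1 + X) * (-(1 + X) ^ 2 + 2 * X : ℤ[X]) ^ n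
      = C ((-1) ^ n) * ((1 + X) * (1 + X ^ 2) ^ n) := by
    rw [show -(1 + X) ^ 2 + 2 * X = -(1 + X ^ 2 : ℤ[X]) by ring, neg_pow]
    simp only [map_pow, map_neg, map_one]; ring
  have hcoeff := congrArg (coeff · n) hpoly
  simp only [coeff_C_mul, coeff_one_add_X_mul_one_add_X_sq_pow] at hcoeff
  rw [← hcoeff, add_pow, mul_sum, finsetSum_coeff]
  refine sum_congr rfl fun k hk => ?_
  obtain ⟨d, rfl⟩ := Nat.exists_eq_add_of_le (mem_range_succ_iff.mp hk)
  have hterm : (1 + X) * ((-(1 + X) ^ 2) ^ k * (2 * X) ^ d * ((k + d).choose k : ℤ[X]))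
      = C ((-1) ^ k * (k + d).choose k * 2 ^ d : ℤ) * ((1 + X) ^ (2 * k + 1) * X ^ d) := by
    rw [neg_pow, ← pow_mul, pow_succ]
    simp only [map_mul, map_pow, map_neg, map_one, map_natCast, map_ofNat]; ring
  rw [Nat.add_sub_cancel_left, hterm, coeff_C_mul, coeff_mul_X_pow, coeff_one_add_X_pow]
  ring

theorem doubleFactorial_two_mul_add_one_mul_two_pow (k : ℕ) :
    (2 * k + 1)‼ * 2 ^ k = (2 * k + 1).choose k * (k + 1)! := by
  apply Nat.eq_of_mul_eq_mul_right k.factorial_pos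
  have hfac := Nat.choose_mul_factorial_mul_factorial (show k ≤ 2 * k + 1 by omega)
  rw [show 2 * k + 1 - k = k + 1 by omega, factorial_eq_mul_doubleFactorial (2 * k),
    doubleFactorial_two_mul] at hfac
  rw [mul_assoc, ← hfac]; ring

theorem centralBinom_mul_doubleFactorial_two_mul (m : ℕ) :
    centralBinom m * (2 * m)‼ = 4 ^ m * (2 * m - 1)‼ := by
  rcases m with _ | j
  · simp
  have hfac :
      centralBinom (j + 1) * (j + 1)! * (j + 1)! = 2 ^ (j + 1) * (j + 1)! * (2 * j + 1)‼ := by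
    rw [centralBinom_eq_two_mul_choose, two_mul, add_choose_mul_factorial_mul_factorial,
      ← doubleFactorial_two_mul, show j + 1 + (j + 1) = 2 * j + 1 + 1 by ring,
      factorial_eq_mul_doubleFactorial, show 2 * (j + 1) = 2 * j + 1 + 1 by ring]
  apply Nat.eq_of_mul_eq_mul_right (j + 1).factorial_pos
  rw [doubleFactorial_two_mul, show 2 * (j + 1) - 1 = 2 * j + 1 by omega,
    show 4 ^ (j + 1) = 2 ^ (j + 1) * 2 ^ (j + 1) by rw [← mul_pow]; norm_num]
  calc _ = 2 ^ (j + 1) * (centralBinom (j + 1) * (j + 1)! * (j + 1)!) := by ring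
    _ = _ := by rw [hfac]; ring

theorem choose_mul_doubleFactorial_two_mul_add_two (m : ℕ) :
    (2 * m + 1).choose m * (2 * m + 2)‼ = 2 ^ (2 * m + 1) * (2 * m + 1)‼ := by
  have hcentral : centralBinom (m + 1) = 2 * (2 * m + 1).choose m := by
    rw [centralBinom_eq_two_mul_choose, show 2 * (m + 1) = 2 * m + 1 + 1 by ring,
      choose_succ_succ, choose_symm_half]
    ring
  have heven := centralBinom_mul_doubleFactorial_two_mul (m + 1)
  rw [hcentral, show 2 * (m + 1) = 2 * m + 2 by ring, show 2 * m + 2 - 1 = 2 * m + 1 by omega,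
    pow_succ 4] at heven
  apply Nat.eq_of_mul_eq_mul_left two_pos
  calc 2 * ((2 * m + 1).choose m * (2 * m + 2)‼) = 4 ^ m * 4 * (2 * m + 1)‼ := by
        rw [← heven]; ring
    _ = _ := by rw [pow_succ, pow_mul]; ring

theorem sum_eq_neg_one_pow_mul_choose_half_div (n : ℕ) :
    ∑ k ∈ range (n + 1),
      (-1 : ℝ) ^ k / (n - k)! * (2 * k + 1)‼ / (k ! * (k + 1)!)
      = (-1) ^ n * n.choose (n / 2) / (2 ^ n * n !) := by
  have hint := congrArg (Int.cast : ℤ → ℝ) (sum_neg_one_pow_mul_choose_mul_choose_mul_two_pow n)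
  push_cast at hint
  rw [eq_div_iff (by positivity), sum_mul, ← hint]
  refine sum_congr rfl fun k hk => ?_
  obtain ⟨d, rfl⟩ := Nat.exists_eq_add_of_le (mem_range_succ_iff.mp hk)
  have hdf : ((2 * k + 1)‼ : ℝ) * 2 ^ k = (2 * k + 1).choose k * (k + 1)! := by
    exact_mod_cast doubleFactorial_two_mul_add_one_mul_two_pow k
  have hch : ((k + d).choose k : ℝ) * k ! * d ! = (k + d)! := by
    have := Nat.choose_mul_factorial_mul_factorial (Nat.le_add_right k d)
    rw [Nat.add_sub_cancel_left] at this
    exact_mod_cast this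
  rw [Nat.add_sub_cancel_left, pow_add, ← hch]
  field_simp
  linear_combination ((k + d).choose k : ℝ) * hdf

theorem sqrt_factorial_mul_factorial_succ (n : ℕ) :
    √((n ! : ℝ) * (n + 1)!) = n ! * √((n : ℝ) + 1) := by
  rw [factorial_succ, cast_mul, cast_succ, ← mul_assoc, mul_comm, ← mul_assoc, ← sq,
    Real.sqrt_mul (by positivity), Real.sqrt_sq (by positivity), mul_comm]

theorem samoletov_sum (n : ℕ) :
    ∑ k ∈ Finset.range (n + 1),
      (-1 : ℝ) ^ k / (Nat.factorial (n - k)) * (Nat.doubleFactorial (2 * k + 1)) /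
        (Nat.factorial k * Nat.factorial (k + 1))
    = (-1 : ℝ) ^ n / Real.sqrt (Nat.factorial n * Nat.factorial (n + 1)) *
        (Real.sqrt (n + 1) * (Nat.doubleFactorial (n - 1)) / (Nat.doubleFactorial n))
          ^ ((-1 : ℤ) ^ n) := by
  rw [sum_eq_neg_one_pow_mul_choose_half_div, sqrt_factorial_mul_factorial_succ]
  rcases Nat.even_or_odd' n with ⟨m, rfl | rfl⟩
  · have h := centralBinom_mul_doubleFactorial_two_mul m
    rw [centralBinom_eq_two_mul_choose] at h
    simp only [(even_two_mul m).neg_one_pow, zpow_one, Nat.mul_div_cancel_left m two_pos]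
    field_simp
    rw [pow_mul]; norm_num
    exact_mod_cast h
  · have h := choose_mul_doubleFactorial_two_mul_add_two m
    have hs2 : √((↑(2 * m + 1) : ℝ) + 1) ^ 2 = ↑(2 * m + 2) := by
      rw [Real.sq_sqrt (by positivity)]; push_cast; ring
    simp only [(odd_two_mul_add_one m).neg_one_pow, zpow_neg, zpow_one,
      show (2 * m + 1) / 2 = m by omega, Nat.add_sub_cancel]
    field_simp
    rw [hs2, neg_inj, mul_assoc, ← cast_mul, ← doubleFactorial_add_two]
    exact_mod_cast h
end

section
/- For every natural number n and complex number a such that (2a)_k ≠ 0 for all 0 ≤ k ≤ n, the terminating hypergeometric sum ∑_{k=0}^{n} (-n)_k (a)_k 2^k / ((2a)_k k!) equals (1/2)_m / (a+1/2)_m when n = 2m is even, and 0 when n is odd. -/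
/-!
Zeilberger's algorithm produces the three-term recurrence
`(2a + n + 1) S(n + 2) = (n + 1) S(n)` for `S(n) = ₂F₁(-n, a; 2a; 2)`, with the telescoping
certificate `G(k + 1) = 2 (a + k) (-n - 1)_k (a)_k 2^k / ((2a)_k k!)`. Starting from
`S(0) = 1` and `S(1) = 0`, the recurrence gives `S(2m) = (1/2)_m / (a + 1/2)_m` and `S(2m + 1) = 0`.
-/

open Finset

/-- The Pochhammer symbol (rising factorial) `(x)_k = x (x+1) ⋯ (x+k-1)`. -/
noncomputable def poch (x : ℂ) (k : ℕ) : ℂ := (ascPochhammer ℂ k).eval x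

lemma poch_zero (x : ℂ) : poch x 0 = 1 := by simp [poch]

lemma poch_succ (x : ℂ) (k : ℕ) : poch x (k + 1) = poch x k * (x + k) :=
  ascPochhammer_succ_eval k x

lemma poch_succ' (x : ℂ) (k : ℕ) : poch x (k + 1) = x * poch (x + 1) k := by
  simp [poch, ascPochhammer_succ_left]

lemma poch_ne_zero_of_le {x : ℂ} {m K : ℕ} (hK : poch x K ≠ 0) (hm : m ≤ K) : poch x m ≠ 0 := by
  rw [Ne, poch, ascPochhammer_eval_eq_zero_iff] at hK ⊢
  exact fun ⟨j, hj, hjx⟩ ↦ hK ⟨j, hj.trans_le hm, hjx⟩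

lemma poch_neg_natCast_of_lt {N k : ℕ} (h : N < k) : poch (-(N : ℂ)) k = 0 :=
  ascPochhammer_eval_neg_coe_nat_of_lt h

/-- The part of the `k`-th term of `₂F₁(x, a; 2a; 2)` that does not depend on `x`. -/
noncomputable def twoF1Coeff (a : ℂ) (k : ℕ) : ℂ :=
  poch a k * 2 ^ k / (poch (2 * a) k * k.factorial)

lemma twoF1Coeff_zero (a : ℂ) : twoF1Coeff a 0 = 1 := by simp [twoF1Coeff, poch_zero]

lemma twoF1Coeff_succ_mul {a : ℂ} {k : ℕ} (h : poch (2 * a) (k + 1) ≠ 0) :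
    twoF1Coeff a (k + 1) * ((2 * a + k) * (k + 1)) = 2 * (a + k) * twoF1Coeff a k := by
  rw [poch_succ] at h
  obtain ⟨hpoch, hlin⟩ := mul_ne_zero_iff.mp h
  have hfac : (k.factorial : ℂ) ≠ 0 := Nat.cast_ne_zero.mpr k.factorial_ne_zero
  simp only [twoF1Coeff, poch_succ, Nat.factorial_succ]
  push_cast
  rw [div_mul_eq_mul_div, mul_div_assoc', div_eq_div_iff (by
    simp [hpoch, hlin, hfac, Nat.cast_add_one_ne_zero]) (mul_ne_zero hpoch hfac)]
  ring

/-- Zeilberger's telescoping identity; at `x = -(n + 1)`, `K = n + 2` its right side vanishes. -/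
lemma sum_range_contiguous (x a : ℂ) {K : ℕ} (h : poch (2 * a) K ≠ 0) :
    ∑ k ∈ range (K + 1), ((2 * a - x) * poch (x - 1) k + x * poch (x + 1) k) * twoF1Coeff a k
      = 2 * (a + K) * poch x K * twoF1Coeff a K := by
  induction K with
  | zero => simp [poch_zero, twoF1Coeff_zero]
  | succ K ih =>
    have hstep := twoF1Coeff_succ_mul h
    have hlin : 2 * a + K ≠ 0 := by
      rw [poch_succ] at h
      exact right_ne_zero_of_mul h
    rw [sum_range_succ, ih (poch_ne_zero_of_le h K.le_succ)]
    have hshift : poch x K * (x + K) = x * poch (x + 1) K := by rw [← poch_succ, poch_succ']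
    apply mul_left_cancel₀ (mul_ne_zero hlin (Nat.cast_add_one_ne_zero K))
    rw [poch_succ' (x - 1), sub_add_cancel, poch_succ, poch_succ x]
    push_cast
    linear_combination -((2 * a + K) * (K + 1)) * poch x K * hstep
      - (2 * a + K) * (K + 1) * twoF1Coeff a (K + 1) * (x + K + 1) * hshift

/-- `twoF1Sum n a = ₂F₁(-n, a; 2a; 2)`. -/
noncomputable def twoF1Sum (n : ℕ) (a : ℂ) : ℂ :=
  ∑ k ∈ range (n + 1), poch (-(n : ℂ)) k * twoF1Coeff a k

lemma twoF1Sum_eq_sum_range (a : ℂ) {n K : ℕ} (h : n ≤ K) :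
    twoF1Sum n a = ∑ k ∈ range (K + 1), poch (-(n : ℂ)) k * twoF1Coeff a k :=
  (eventually_constant_sum (fun _ hk ↦ by rw [poch_neg_natCast_of_lt hk, zero_mul])
    (Nat.succ_le_succ h)).symm

lemma twoF1Sum_add_two {a : ℂ} {n : ℕ} (h : poch (2 * a) (n + 2) ≠ 0) :
    twoF1Sum (n + 2) a = (n + 1) / (2 * a + n + 1) * twoF1Sum n a := by
  have hlin : 2 * a + n + 1 ≠ 0 := by
    rw [poch_succ] at h
    simpa [add_assoc] using right_ne_zero_of_mul h
  have key := sum_range_contiguous (-((n + 1 : ℕ) : ℂ)) a h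
  rw [poch_neg_natCast_of_lt (Nat.lt_succ_self _), mul_zero, zero_mul] at key
  push_cast at key
  simp only [add_mul, sum_add_distrib, mul_assoc, ← mul_sum] at key
  rw [show -((n : ℂ) + 1) - 1 = -((n + 2 : ℕ) : ℂ) by push_cast; ring,
    show -((n : ℂ) + 1) + 1 = -(n : ℂ) by ring, ← twoF1Sum_eq_sum_range a le_rfl,
    ← twoF1Sum_eq_sum_range a (by omega)] at key
  rw [div_mul_eq_mul_div, eq_div_iff hlin]
  linear_combination key

lemma twoF1Sum_zero (a : ℂ) : twoF1Sum 0 a = 1 := by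
  simp [twoF1Sum, poch_zero, twoF1Coeff_zero]

lemma twoF1Sum_one {a : ℂ} (h : poch (2 * a) 1 ≠ 0) : twoF1Sum 1 a = 0 := by
  have hc : twoF1Coeff a 1 = 1 := by
    have h2a : 2 * a ≠ 0 := by simpa [poch_succ, poch_zero] using h
    have := twoF1Coeff_succ_mul (k := 0) h
    rw [twoF1Coeff_zero] at this
    simpa [h2a] using this
  simp [twoF1Sum, sum_range_succ, hc, poch_succ, poch_zero, twoF1Coeff_zero]

lemma twoF1Sum_two_mul {a : ℂ} (m : ℕ) (h : poch (2 * a) (2 * m) ≠ 0) :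
    twoF1Sum (2 * m) a = poch (1 / 2) m / poch (a + 1 / 2) m := by
  induction m with
  | zero => simp [twoF1Sum_zero, poch_zero]
  | succ m ih =>
    rw [show 2 * (m + 1) = 2 * m + 2 by ring] at h ⊢
    rw [twoF1Sum_add_two h, ih (poch_ne_zero_of_le h (by omega)), poch_succ, poch_succ,
      mul_div_mul_comm, mul_comm, ← mul_div_mul_left (1 / 2 + (m : ℂ)) _ (two_ne_zero' ℂ)]
    push_cast
    ring

lemma twoF1Sum_two_mul_add_one {a : ℂ} (m : ℕ) (h : poch (2 * a) (2 * m + 1) ≠ 0) :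
    twoF1Sum (2 * m + 1) a = 0 := by
  induction m with
  | zero => exact twoF1Sum_one h
  | succ m ih =>
    rw [show 2 * (m + 1) + 1 = 2 * m + 1 + 2 by ring] at h ⊢
    rw [twoF1Sum_add_two h, ih (poch_ne_zero_of_le h (by omega)), mul_zero]

theorem twoF1_neg_n_a_twoA (n : ℕ) (a : ℂ) (h : ∀ k ≤ n, poch (2 * a) k ≠ 0) :
    (∀ m : ℕ, n = 2 * m →
      ∑ k ∈ range (n + 1),
          poch (-(n : ℂ)) k * poch a k * 2 ^ k / (poch (2 * a) k * (k.factorial : ℂ))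
        = poch (1 / 2) m / poch (a + 1 / 2) m) ∧
    (Odd n →
      ∑ k ∈ range (n + 1),
          poch (-(n : ℂ)) k * poch a k * 2 ^ k / (poch (2 * a) k * (k.factorial : ℂ)) = 0) := by
  have hsum : ∑ k ∈ range (n + 1),
      poch (-(n : ℂ)) k * poch a k * 2 ^ k / (poch (2 * a) k * (k.factorial : ℂ))
        = twoF1Sum n a := by
    simp only [twoF1Sum, twoF1Coeff, mul_assoc, mul_div_assoc]
  rw [hsum]
  constructor
  · rintro m rfl
    exact twoF1Sum_two_mul m (h _ le_rfl)
  · rintro ⟨m, rfl⟩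
    exact twoF1Sum_two_mul_add_one m (h _ le_rfl)
end

section
/- For every natural number n and complex number a with (2a-1)_k ≠ 0 for 0 ≤ k ≤ 2n, ∑_{k=0}^{2n} (-2n)_k (a)_k 2^k / ((2a-1)_k k!) = (1/2)_n / (a-1/2)_n. -/
/-!
Let `F(m) = ₂F₁(-m, b; c; 2) = ∑ₖ C(m, k) (-2)ᵏ (b)ₖ / (c)ₖ`. Gauss' contiguous relation in the
first parameter, at `z = 2`, reads `(c + m + 1) F(m + 2) + (2b - c) F(m + 1) = (m + 1) F(m)`; it
telescopes termwise, against `g(k) = 2 (b + k) C(m + 1, k) (-2)ᵏ (b)ₖ / (c)ₖ`. For `b = a`,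
`c = 2a - 1` the middle coefficient is `1`, and the two-step recurrence together with `F(0) = 1`,
`F(1) = -1 / (2a - 1)` forces `F(2n) = (1/2)ₙ / (a - 1/2)ₙ` and
`F(2n + 1) = -(1/2)ₙ₊₁ / (a - 1/2)ₙ₊₁`.
-/

open Finset

lemma poch_one (x : ℂ) : poch x 1 = x := by simp [poch]

lemma poch_ne_zero_iff {x : ℂ} {n : ℕ} : poch x n ≠ 0 ↔ ∀ j < n, x + j ≠ 0 := by
  simp [poch, ascPochhammer_eval_eq_zero_iff, eq_neg_iff_add_eq_zero, add_comm]

lemma poch_ne_zero_of_le_s4 {x : ℂ} {k n : ℕ} (h : poch x n ≠ 0) (hkn : k ≤ n) : poch x k ≠ 0 :=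
  poch_ne_zero_iff.2 fun j hj => poch_ne_zero_iff.1 h j (hj.trans_le hkn)

lemma poch_neg_natCast_div_factorial (m k : ℕ) :
    poch (-(m : ℂ)) k / k.factorial = (-1) ^ k * m.choose k := by
  rw [poch, ascPochhammer_eval_neg_eq_descPochhammer, descPochhammer_eval_eq_descFactorial,
    Nat.descFactorial_eq_factorial_mul_choose]
  have : (k.factorial : ℂ) ≠ 0 := Nat.cast_ne_zero.2 k.factorial_ne_zero
  push_cast
  field_simp

noncomputable def twoF1AtTwoCoeff (b c : ℂ) (k : ℕ) : ℂ := (-2) ^ k * poch b k / poch c k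

/-- `₂F₁(-m, b; c; 2)`, using `(-m)ₖ / k! = (-1)ᵏ C(m, k)`. -/
noncomputable def twoF1AtTwo (b c : ℂ) (m : ℕ) : ℂ :=
  ∑ k ∈ range (m + 1), (m.choose k : ℂ) * twoF1AtTwoCoeff b c k

section

variable (b c : ℂ)

lemma twoF1AtTwo_eq_sum_poch (m : ℕ) :
    twoF1AtTwo b c m = ∑ k ∈ range (m + 1),
      poch (-(m : ℂ)) k * poch b k * 2 ^ k / (poch c k * k.factorial) := by
  refine sum_congr rfl fun k _ => ?_
  rw [show poch (-(m : ℂ)) k * poch b k * 2 ^ k / (poch c k * k.factorial)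
      = poch (-(m : ℂ)) k / k.factorial * (2 ^ k * poch b k / poch c k) by ring,
    poch_neg_natCast_div_factorial, twoF1AtTwoCoeff, neg_pow]
  ring

lemma twoF1AtTwo_eq_sum_range_of_lt {m N : ℕ} (h : m < N) :
    twoF1AtTwo b c m = ∑ k ∈ range N, (m.choose k : ℂ) * twoF1AtTwoCoeff b c k := by
  refine sum_subset (range_subset_range.2 h) fun k _ hk => ?_
  rw [Nat.choose_eq_zero_of_lt (by simpa using hk), Nat.cast_zero, zero_mul]

lemma twoF1AtTwo_zero : twoF1AtTwo b c 0 = 1 := by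
  simp [twoF1AtTwo, twoF1AtTwoCoeff, poch]

lemma twoF1AtTwo_one : twoF1AtTwo b c 1 = 1 - 2 * b / c := by
  simp [twoF1AtTwo, twoF1AtTwoCoeff, sum_range_succ, poch, sub_eq_add_neg, mul_div_assoc]

lemma twoF1AtTwoCoeff_succ {k : ℕ} (h : poch c (k + 1) ≠ 0) :
    (c + k) * twoF1AtTwoCoeff b c (k + 1) = -2 * (b + k) * twoF1AtTwoCoeff b c k := by
  rw [poch_succ] at h
  obtain ⟨hpoch, hlast⟩ := mul_ne_zero_iff.1 h
  simp only [twoF1AtTwoCoeff, poch_succ]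
  field_simp
  ring

lemma choose_contiguous (m k : ℕ) (hk : k ≤ m + 1) :
    (c + m + 1) * ((m + 2).choose (k + 1) : ℂ) + (2 * b - c) * (m + 1).choose (k + 1)
      - (m + 1) * m.choose (k + 1)
    = 2 * (b + k + 1) * (m + 1).choose (k + 1) + (c + k) * (m + 1).choose k := by
  have pascal₁ : ((m + 2).choose (k + 1) : ℂ) = (m + 1).choose k + (m + 1).choose (k + 1) := by
    exact_mod_cast Nat.choose_succ_succ' (m + 1) k
  have pascal₀ : ((m + 1).choose (k + 1) : ℂ) = m.choose k + m.choose (k + 1) := by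
    exact_mod_cast Nat.choose_succ_succ' m k
  have absorb₀ : (m + 1 : ℂ) * m.choose k = (m + 1).choose (k + 1) * (k + 1) := by
    exact_mod_cast Nat.add_one_mul_choose_eq m k
  have absorb₁ : ((m + 1).choose (k + 1) : ℂ) * (k + 1) = (m + 1).choose k * (m + 1 - k) := by
    have := Nat.choose_succ_right_eq (m + 1) k
    rw [← Nat.cast_inj (R := ℂ)] at this
    push_cast [Nat.cast_sub hk] at this
    exact this
  linear_combination (c + m + 1) * pascal₁ + (m + 1) * pascal₀ + absorb₀ - absorb₁

theorem twoF1AtTwo_contiguous (m : ℕ) (hc : poch c (m + 2) ≠ 0) :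
    (c + m + 1) * twoF1AtTwo b c (m + 2) + (2 * b - c) * twoF1AtTwo b c (m + 1)
      = (m + 1) * twoF1AtTwo b c m := by
  set g : ℕ → ℂ := fun k => 2 * (b + k) * (m + 1).choose k * twoF1AtTwoCoeff b c k
  have step : ∀ k ∈ range (m + 2),
      (c + m + 1) * ((m + 2).choose (k + 1) * twoF1AtTwoCoeff b c (k + 1))
        + (2 * b - c) * ((m + 1).choose (k + 1) * twoF1AtTwoCoeff b c (k + 1))
        - (m + 1) * (m.choose (k + 1) * twoF1AtTwoCoeff b c (k + 1))
      = g (k + 1) - g k := by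
    intro k hk
    have hk : k ≤ m + 1 := Nat.lt_succ_iff.1 (mem_range.1 hk)
    have hcoeff := twoF1AtTwoCoeff_succ b c (k := k) (poch_ne_zero_of_le_s4 hc (by omega))
    have hchoose := choose_contiguous b c m k hk
    simp only [g]
    push_cast
    linear_combination twoF1AtTwoCoeff b c (k + 1) * hchoose + (m + 1).choose k * hcoeff
  rw [twoF1AtTwo_eq_sum_range_of_lt b c (show m + 2 < m + 3 by omega),
    twoF1AtTwo_eq_sum_range_of_lt b c (show m + 1 < m + 3 by omega),
    twoF1AtTwo_eq_sum_range_of_lt b c (show m < m + 3 by omega), ← sub_eq_zero, mul_sum,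
    mul_sum, mul_sum, ← sum_add_distrib, ← sum_sub_distrib, sum_range_succ', sum_congr rfl step,
    sum_range_sub]
  simp only [g, twoF1AtTwoCoeff, poch, Nat.choose_succ_self, Nat.choose_zero_right, pow_zero,
    ascPochhammer_zero, Polynomial.eval_one, Nat.cast_zero, Nat.cast_one, div_one]
  ring

end

section

variable (a : ℂ)

lemma twoF1AtTwo_succ_succ (m : ℕ) (h : poch (2 * a - 1) (m + 2) ≠ 0) :
    twoF1AtTwo a (2 * a - 1) (m + 2)
      = ((m + 1) * twoF1AtTwo a (2 * a - 1) m - twoF1AtTwo a (2 * a - 1) (m + 1)) / (2 * a + m) := by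
  have hm : 2 * a - 1 + (m + 1 : ℕ) ≠ 0 := poch_ne_zero_iff.1 h (m + 1) (by omega)
  push_cast at hm
  rw [eq_div_iff (by contrapose! hm; linear_combination hm)]
  linear_combination twoF1AtTwo_contiguous a (2 * a - 1) m h

lemma poch_sub_half_ne_zero {n N : ℕ} (h : poch (2 * a - 1) N ≠ 0) (hn : 2 * n ≤ N + 1) :
    poch (a - 1 / 2) n ≠ 0 := by
  refine poch_ne_zero_iff.2 fun j hj hzero => poch_ne_zero_iff.1 h (2 * j) (by omega) ?_
  push_cast
  linear_combination 2 * hzero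

lemma twoF1AtTwo_even_step (n : ℕ) (h : poch (2 * a - 1) (2 * n + 2) ≠ 0)
    (h₀ : twoF1AtTwo a (2 * a - 1) (2 * n) = poch (1 / 2) n / poch (a - 1 / 2) n)
    (h₁ : twoF1AtTwo a (2 * a - 1) (2 * n + 1) = -(poch (1 / 2) (n + 1) / poch (a - 1 / 2) (n + 1))) :
    twoF1AtTwo a (2 * a - 1) (2 * n + 2) = poch (1 / 2) (n + 1) / poch (a - 1 / 2) (n + 1) := by
  have hQ : poch (a - 1 / 2) n ≠ 0 := poch_sub_half_ne_zero a h (by omega)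
  have h2n : 2 * a - 1 + (2 * n : ℕ) ≠ 0 := poch_ne_zero_iff.1 h (2 * n) (by omega)
  have h2n1 : 2 * a - 1 + (2 * n + 1 : ℕ) ≠ 0 := poch_ne_zero_iff.1 h (2 * n + 1) (by omega)
  push_cast at h2n h2n1
  have hd : a + n ≠ 0 := by contrapose! h2n1; linear_combination 2 * h2n1
  rw [twoF1AtTwo_succ_succ a (2 * n) h, h₀, h₁, poch_succ, poch_succ]
  push_cast
  generalize poch (a - 1 / 2) n = Q at hQ ⊢
  field_simp
  ring

lemma twoF1AtTwo_odd_step (n : ℕ) (h : poch (2 * a - 1) (2 * n + 3) ≠ 0)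
    (h₁ : twoF1AtTwo a (2 * a - 1) (2 * n + 1) = -(poch (1 / 2) (n + 1) / poch (a - 1 / 2) (n + 1)))
    (h₂ : twoF1AtTwo a (2 * a - 1) (2 * n + 2) = poch (1 / 2) (n + 1) / poch (a - 1 / 2) (n + 1)) :
    twoF1AtTwo a (2 * a - 1) (2 * n + 3)
      = -(poch (1 / 2) (n + 2) / poch (a - 1 / 2) (n + 2)) := by
  have hQ : poch (a - 1 / 2) (n + 1) ≠ 0 := poch_sub_half_ne_zero a h (by omega)
  have h2n2 : 2 * a - 1 + (2 * n + 2 : ℕ) ≠ 0 := poch_ne_zero_iff.1 h (2 * n + 2) (by omega)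
  push_cast at h2n2
  rw [twoF1AtTwo_succ_succ a (2 * n + 1) h, h₁, h₂, poch_succ _ (n + 1), poch_succ _ (n + 1)]
  push_cast
  generalize poch (a - 1 / 2) (n + 1) = Q at hQ ⊢
  field_simp
  ring

theorem twoF1AtTwo_two_mul_sub_one (n : ℕ) :
    (poch (2 * a - 1) (2 * n) ≠ 0 →
      twoF1AtTwo a (2 * a - 1) (2 * n) = poch (1 / 2) n / poch (a - 1 / 2) n) ∧
    (poch (2 * a - 1) (2 * n + 1) ≠ 0 →
      twoF1AtTwo a (2 * a - 1) (2 * n + 1) = -(poch (1 / 2) (n + 1) / poch (a - 1 / 2) (n + 1))) := by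
  induction n with
  | zero =>
    refine ⟨fun _ => by simp [twoF1AtTwo_zero, poch], fun h => ?_⟩
    rw [poch_one] at h
    rw [twoF1AtTwo_one, poch_one, poch_one]
    field_simp
    ring
  | succ n ih =>
    have even (h : poch (2 * a - 1) (2 * n + 2) ≠ 0) :=
      twoF1AtTwo_even_step a n h (ih.1 (poch_ne_zero_of_le_s4 h (by omega)))
        (ih.2 (poch_ne_zero_of_le_s4 h (by omega)))
    exact ⟨even, fun h => twoF1AtTwo_odd_step a n h (ih.2 (poch_ne_zero_of_le_s4 h (by omega)))
      (even (poch_ne_zero_of_le_s4 h (by omega)))⟩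

end

theorem twoF1_neg2n_a_twoAm1 (n : ℕ) (a : ℂ) (h : ∀ k ≤ 2 * n, poch (2 * a - 1) k ≠ 0) :
    ∑ k ∈ range (2 * n + 1),
        poch (-(2 * n : ℂ)) k * poch a k * 2 ^ k / (poch (2 * a - 1) k * (k.factorial : ℂ))
      = poch (1 / 2) n / poch (a - 1 / 2) n := by
  rw [show (2 * n : ℂ) = ((2 * n : ℕ) : ℂ) by norm_cast, ← twoF1AtTwo_eq_sum_poch]
  exact (twoF1AtTwo_two_mul_sub_one a n).1 (h _ le_rfl)
end

section
/- For every positive natural number n and complex number a, ∑_{k=0}^{n} (-n)_k (a)_k 2^k / ((-2n)_k k!) = (a/2 + 1/2)_n / (1/2)_n. -/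
open Finset

lemma poch_neg_natCast (m k : ℕ) : poch (-m) k = (-1) ^ k * m.descFactorial k := by
  rw [poch, ascPochhammer_eval_neg_eq_descPochhammer, descPochhammer_eval_eq_descFactorial]

lemma poch_half_mul_four_pow_mul_factorial (n : ℕ) :
    poch (1 / 2) n * (4 ^ n * n.factorial) = (2 * n).factorial := by
  induction n with
  | zero => simp [poch_zero]
  | succ n ih =>
    rw [poch_succ, Nat.mul_succ, Nat.factorial_succ, Nat.factorial_succ, Nat.factorial_succ]
    push_cast
    linear_combination (2 * (n : ℂ) + 1) * 2 * (n + 1) * ih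

noncomputable def clearedTerm (a : ℂ) (n k : ℕ) : ℂ :=
  n.choose k * poch a k * 2 ^ k * (2 * n - k).factorial

lemma term_eq_clearedTerm_div (a : ℂ) {n k : ℕ} (hk : k ≤ n) :
    poch (-n) k * poch a k * 2 ^ k / (poch (-(2 * n)) k * k.factorial)
      = clearedTerm a n k / (2 * n).factorial := by
  have hfac : (2 * n - k).factorial * (2 * n).descFactorial k = (2 * n).factorial :=
    Nat.factorial_mul_descFactorial (by omega)
  have hdesc : ((2 * n).descFactorial k : ℂ) ≠ 0 := by
    exact_mod_cast (Nat.descFactorial_pos.2 (by omega)).ne'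
  rw [show (2 * n : ℂ) = ((2 * n : ℕ) : ℂ) by push_cast; ring, poch_neg_natCast,
    poch_neg_natCast, Nat.descFactorial_eq_factorial_mul_choose n k, clearedTerm,
    div_eq_div_iff (by simp [hdesc, Nat.factorial_ne_zero]) (by simp [Nat.factorial_ne_zero]),
    ← hfac]
  push_cast
  ring

lemma clearedTerm_succ_right_self (a : ℂ) (n : ℕ) : clearedTerm a n (n + 1) = 0 := by
  simp [clearedTerm]

lemma clearedTerm_succ_zero (a : ℂ) (n : ℕ) :
    clearedTerm a (n + 1) 0 = 2 * (n + 1) * ((2 * n + 1) * clearedTerm a n 0) := by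
  simp only [clearedTerm, Nat.choose_zero_right, Nat.sub_zero, pow_zero, poch_zero,
    Nat.mul_succ, Nat.factorial_succ]
  push_cast
  ring

lemma clearedTerm_succ_succ (a : ℂ) {n j : ℕ} (hj : j ≤ n) :
    clearedTerm a (n + 1) (j + 1) = 2 * (n + 1) *
      ((2 * n + 1 - (j + 1 : ℕ)) * clearedTerm a n (j + 1) + (a + j) * clearedTerm a n j) := by
  obtain rfl | hn := n.eq_zero_or_pos
  · obtain rfl : j = 0 := by omega
    simp [clearedTerm, poch_succ, poch_zero, mul_comm]
  obtain ⟨m, hm⟩ : ∃ m, 2 * n - j = m + 1 := ⟨2 * n - j - 1, by omega⟩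
  have hmc : (m : ℂ) = 2 * n - j - 1 := by
    have := congrArg (Nat.cast : ℕ → ℂ) hm
    push_cast [Nat.cast_sub (show j ≤ 2 * n by omega)] at this
    linear_combination -this
  have hchoose : (n + 1) * (n.choose j : ℂ) = (n + 1).choose (j + 1) * (j + 1) := by
    exact_mod_cast Nat.add_one_mul_choose_eq n j
  have hchoose' : (n.choose (j + 1) : ℂ) * (j + 1) = n.choose j * (n - j) := by
    rw [← Nat.cast_sub hj]; exact_mod_cast Nat.choose_succ_right_eq n j
  have hj1 : (j + 1 : ℂ) ≠ 0 := by exact_mod_cast j.succ_ne_zero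
  apply mul_left_cancel₀ hj1
  simp only [clearedTerm, show 2 * (n + 1) - (j + 1) = m + 2 by omega,
    show 2 * n - (j + 1) = m by omega, hm, Nat.factorial_succ, poch_succ]
  push_cast
  rw [hmc]
  linear_combination
    -(poch a j * (a + j) * 2 ^ (j + 1) * m.factorial * (2 * n - j + 1) * (2 * n - j)) * hchoose
      - 2 * (n + 1) * (2 * n - j) * poch a j * (a + j) * 2 ^ (j + 1) * m.factorial * hchoose'

lemma sum_clearedTerm_succ (a : ℂ) (n : ℕ) :
    ∑ k ∈ range (n + 2), clearedTerm a (n + 1) k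
      = 2 * (n + 1) * (a + 2 * n + 1) * ∑ k ∈ range (n + 1), clearedTerm a n k := by
  set g : ℕ → ℂ := fun k ↦ (2 * n + 1 - k) * clearedTerm a n k with hg
  have hshift : ∑ k ∈ range (n + 2), clearedTerm a (n + 1) k = 2 * (n + 1) *
      (∑ k ∈ range (n + 2), g k + ∑ k ∈ range (n + 1), (a + k) * clearedTerm a n k) := by
    rw [sum_range_succ', sum_range_succ' g,
      sum_congr rfl fun j hj ↦ clearedTerm_succ_succ a (Nat.lt_succ_iff.mp (mem_range.mp hj)),
      clearedTerm_succ_zero, ← mul_sum, sum_add_distrib]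
    simp only [hg, Nat.cast_zero, sub_zero]
    ring
  rw [hshift, sum_range_succ g]
  simp only [hg, clearedTerm_succ_right_self, mul_zero, add_zero, ← sum_add_distrib, mul_sum]
  exact sum_congr rfl fun k _ ↦ by ring

lemma sum_clearedTerm (a : ℂ) (n : ℕ) :
    ∑ k ∈ range (n + 1), clearedTerm a n k = 4 ^ n * n.factorial * poch (a / 2 + 1 / 2) n := by
  induction n with
  | zero => simp [clearedTerm, poch_zero]
  | succ n ih =>
    rw [sum_clearedTerm_succ, ih, poch_succ, Nat.factorial_succ]
    push_cast
    ring

theorem twoF1_negn_a_neg2n_general (n : ℕ) (a : ℂ) :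
    ∑ k ∈ range (n + 1),
        poch (-(n : ℂ)) k * poch a k * 2 ^ k / (poch (-(2 * n : ℂ)) k * (k.factorial : ℂ))
      = poch (a / 2 + 1 / 2) n / poch (1 / 2) n := by
  have hhalf := poch_half_mul_four_pow_mul_factorial n
  have hhalf_ne : poch (1 / 2) n ≠ 0 :=
    left_ne_zero_of_mul (hhalf ▸ Nat.cast_ne_zero.2 (Nat.factorial_ne_zero _))
  rw [sum_congr rfl fun k hk ↦ term_eq_clearedTerm_div a (Nat.lt_succ_iff.mp (mem_range.mp hk)),
    ← sum_div, sum_clearedTerm, div_eq_div_iff (Nat.cast_ne_zero.2 (Nat.factorial_ne_zero _))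
    hhalf_ne, ← hhalf]
  ring

theorem twoF1_negn_a_neg2n (n : ℕ) (hn : 0 < n) (a : ℂ) :
    ∑ k ∈ range (n + 1),
        poch (-(n : ℂ)) k * poch a k * 2 ^ k / (poch (-(2 * n : ℂ)) k * (k.factorial : ℂ))
      = poch (a / 2 + 1 / 2) n / poch (1 / 2) n :=
  twoF1_negn_a_neg2n_general n a
end

section
/- For natural numbers n and j and complex number a such that (2a+j)_k ≠ 0 for 0 ≤ k ≤ 2n+1, ∑_{k=0}^{2n+1} (-2n-1)_k (a)_k 2^k / ((2a+j)_k k!) = (2^{2n} (3/2)_n / (2a+j)_{2n+1}) · ∑_{r=0}^{⌊j/2⌋} (-1)^r C(j,2r+1) (-n)_r (a+j)_{n-r}, where terms with 2r+1 > j are zero. -/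
/-!
Write `multichoose x k = (x)_k / k!`, the coefficient of `u ^ k` in `(1 - u) ^ (-x)`, and put
`N = 2n + 1`, `b = a + j`. Expanding the terminating series `₂F₁(-N, a; 2a + j; z)` about `z = 1`
(every coefficient is a Chu–Vandermonde sum) shows that at `z = 2` it equals `N! / (2a + j)_N`
times the coefficient of `u ^ N` in `(1 + u) ^ (-a) (1 - u) ^ (-b) = (1 + u) ^ j (1 - u²) ^ (-b)`.
As `(1 - u²) ^ (-b)` is even, only the odd powers `u ^ (2r + 1)` of `(1 + u) ^ j` contribute, each
against the coefficient `(b)_(n-r) / (n-r)!` of `u ^ (2(n - r))`.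
-/

open Finset

open Ring

theorem Finset.Nat.sum_antidiagonal_sum_antidiagonal_fst {M : Type*} [AddCommMonoid M] (N : ℕ)
    (f : ℕ → ℕ → ℕ → M) :
    ∑ x ∈ antidiagonal N, ∑ y ∈ antidiagonal x.1, f y.1 y.2 x.2 =
      ∑ x ∈ antidiagonal N, ∑ y ∈ antidiagonal x.2, f x.1 y.1 y.2 := by
  rw [sum_sigma', sum_sigma']
  refine sum_bij' (fun p _ => ⟨(p.2.1, p.2.2 + p.1.2), (p.2.2, p.1.2)⟩)
    (fun p _ => ⟨(p.1.1 + p.2.1, p.2.2), (p.1.1, p.2.1)⟩) ?_ ?_ ?_ ?_ (fun _ _ => rfl) <;>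
  · rintro ⟨⟨i, l⟩, ⟨m, t⟩⟩ h
    simp only [mem_sigma, HasAntidiagonal.mem_antidiagonal] at h
    obtain ⟨rfl, rfl⟩ := h
    simp [add_assoc]

theorem Finset.sum_range_two_mul {M : Type*} [AddCommMonoid M] (f : ℕ → M) (m : ℕ) :
    ∑ k ∈ range (2 * m), f k = ∑ r ∈ range m, (f (2 * r) + f (2 * r + 1)) := by
  induction m with
  | zero => simp
  | succ m ih => rw [Nat.mul_succ, sum_range_succ, sum_range_succ, sum_range_succ, ih, add_assoc]

section BinomialRing

variable {R : Type*} [CommRing R] [BinomialRing R]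

theorem Ring.choose_neg_eq_neg_one_pow_mul_multichoose (r : R) (k : ℕ) :
    choose (-r) k = (-1) ^ k * multichoose r k := by
  rw [choose_neg', Units.smul_def, Int.coe_negOnePow_natCast, zsmul_eq_mul]
  push_cast
  rfl

theorem Ring.multichoose_eq_neg_one_pow_mul_choose (r : R) (k : ℕ) :
    multichoose r k = (-1) ^ k * choose (-r) k := by
  rw [choose_neg_eq_neg_one_pow_mul_multichoose, ← mul_assoc, ← mul_pow, neg_one_mul, neg_neg,
    one_pow, one_mul]

theorem Ring.multichoose_add (r s : R) (k : ℕ) :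
    multichoose (r + s) k = ∑ x ∈ antidiagonal k, multichoose r x.1 * multichoose s x.2 := by
  rw [multichoose_eq_neg_one_pow_mul_choose, neg_add, add_choose_eq k (Commute.all _ _), mul_sum]
  refine sum_congr rfl fun x hx => ?_
  rw [← HasAntidiagonal.mem_antidiagonal.mp hx, multichoose_eq_neg_one_pow_mul_choose r,
    multichoose_eq_neg_one_pow_mul_choose s]
  ring

theorem Ring.multichoose_neg_natCast (j k : ℕ) :
    multichoose (-(j : R)) k = (-1) ^ k * (j.choose k : R) := by
  rw [multichoose_eq_neg_one_pow_mul_choose, neg_neg, choose_natCast]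

theorem Ring.multichoose_sub_eq_sum_antidiagonal (β γ : R) (M : ℕ) :
    multichoose (γ - β) M =
      ∑ x ∈ antidiagonal M, (-1) ^ x.1 * multichoose β x.1 * multichoose (γ + x.1) x.2 := by
  rw [multichoose_eq, show γ - β + M - 1 = -β + (γ + M - 1) by ring,
    add_choose_eq M (Commute.all _ _)]
  refine sum_congr rfl fun x hx => ?_
  rw [choose_neg_eq_neg_one_pow_mul_multichoose, multichoose_eq (γ + x.1),
    ← HasAntidiagonal.mem_antidiagonal.mp hx]
  push_cast
  ring_nf

theorem Ring.multichoose_mul_multichoose_add (a : R) (i m : ℕ) :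
    multichoose a i * multichoose (a + i) m = ((i + m).choose i : R) * multichoose a (i + m) :=
  calc multichoose a i * multichoose (a + i) m
      = choose (a + i - 1 + m) m * choose (a + i - 1) i := by
        rw [multichoose_eq, multichoose_eq, mul_comm, add_sub_right_comm]
    _ = (i + m).choose m • choose (a + i - 1 + m) (i + m) := (choose_add_smul_choose _ i m).symm
    _ = ((i + m).choose i : R) * multichoose a (i + m) := by
        rw [nsmul_eq_mul, Nat.choose_symm_add, multichoose_eq]
        push_cast
        ring_nf

theorem Ring.succ_mul_multichoose_succ (r : R) (k : ℕ) :
    (k + 1) * multichoose r (k + 1) = (r + k) * multichoose r k := by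
  have h := multichoose_mul_multichoose_add r k 1
  rw [multichoose_one_right, Nat.choose_succ_self_right] at h
  push_cast at h
  rw [← h, mul_comm]

/-- The left side is `(c)_N ₂F₁(-N, a; c; z) / N!`, the right side its expansion about `z = 1`. -/
theorem sum_antidiagonal_neg_pow_mul_multichoose (a c z : R) (N : ℕ) :
    ∑ x ∈ antidiagonal N, (-z) ^ x.1 * multichoose a x.1 * multichoose (c + x.1) x.2 =
      ∑ x ∈ antidiagonal N, (1 - z) ^ x.1 * multichoose a x.1 * multichoose (c - a) x.2 := by
  symm
  calc _ = ∑ x ∈ antidiagonal N, ∑ y ∈ antidiagonal x.2, (1 - z) ^ x.1 * (-1) ^ y.1 *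
          (multichoose a x.1 * multichoose (a + x.1) y.1) * multichoose (c + x.1 + y.1) y.2 := by
        refine sum_congr rfl fun x _ => ?_
        rw [show c - a = c + x.1 - (a + x.1) by ring, multichoose_sub_eq_sum_antidiagonal, mul_sum]
        refine sum_congr rfl fun y _ => ?_
        ring
    _ = ∑ x ∈ antidiagonal N, ∑ y ∈ antidiagonal x.1, (1 - z) ^ y.1 * (-1) ^ y.2 *
          (multichoose a y.1 * multichoose (a + y.1) y.2) * multichoose (c + y.1 + y.2) x.2 :=
        (Finset.Nat.sum_antidiagonal_sum_antidiagonal_fst N fun i m t => (1 - z) ^ i * (-1) ^ m *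
          (multichoose a i * multichoose (a + i) m) * multichoose (c + i + m) t).symm
    _ = _ := by
        refine sum_congr rfl fun x _ => ?_
        rw [show -z = 1 - z + -1 by ring, (Commute.all _ _).add_pow', sum_mul, sum_mul]
        refine sum_congr rfl fun y hy => ?_
        rw [multichoose_mul_multichoose_add, HasAntidiagonal.mem_antidiagonal.mp hy, nsmul_eq_mul,
          add_assoc, ← Nat.cast_add, HasAntidiagonal.mem_antidiagonal.mp hy]
        ring

def altConvTerm (b : R) (x : ℕ × ℕ) : R := (-1) ^ x.1 * multichoose b x.1 * multichoose b x.2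

/-- The coefficient of `u ^ s` in `(1 + u) ^ (-b) * (1 - u) ^ (-b) = (1 - u ^ 2) ^ (-b)`. -/
def altConv (b : R) (s : ℕ) : R :=
  ∑ x ∈ antidiagonal s, altConvTerm b x

theorem sum_antidiagonal_succ_fst_mul_altConvTerm (b : R) (s : ℕ) :
    ∑ x ∈ antidiagonal (s + 1), (x.1 : R) * altConvTerm b x =
      -(b * altConv b s + ∑ x ∈ antidiagonal s, (x.1 : R) * altConvTerm b x) := by
  rw [Nat.sum_antidiagonal_succ, altConv, mul_sum, ← sum_add_distrib, ← sum_neg_distrib]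
  simp only [Nat.cast_zero, zero_mul, zero_add, altConvTerm]
  refine sum_congr rfl fun x _ => ?_
  push_cast
  linear_combination (-1) ^ (x.1 + 1) * multichoose b x.2 * succ_mul_multichoose_succ b x.1

theorem sum_antidiagonal_succ_snd_mul_altConvTerm (b : R) (s : ℕ) :
    ∑ x ∈ antidiagonal (s + 1), (x.2 : R) * altConvTerm b x =
      b * altConv b s + ∑ x ∈ antidiagonal s, (x.2 : R) * altConvTerm b x := by
  rw [Nat.sum_antidiagonal_succ', altConv, mul_sum, ← sum_add_distrib]
  simp only [Nat.cast_zero, zero_mul, zero_add, altConvTerm]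
  refine sum_congr rfl fun x _ => ?_
  push_cast
  linear_combination (-1) ^ x.1 * multichoose b x.1 * succ_mul_multichoose_succ b x.2

theorem natCast_mul_altConv (b : R) (s : ℕ) :
    s * altConv b s = ∑ x ∈ antidiagonal s, (x.1 : R) * altConvTerm b x +
      ∑ x ∈ antidiagonal s, (x.2 : R) * altConvTerm b x := by
  rw [altConv, mul_sum, ← sum_add_distrib]
  refine sum_congr rfl fun x hx => ?_
  rw [← HasAntidiagonal.mem_antidiagonal.mp hx]
  push_cast
  ring

theorem altConv_add_two (b : R) (s : ℕ) :
    (s + 2) * altConv b (s + 2) = (2 * b + s) * altConv b s := by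
  have h := natCast_mul_altConv b (s + 2)
  rw [sum_antidiagonal_succ_fst_mul_altConvTerm, sum_antidiagonal_succ_snd_mul_altConvTerm,
    sum_antidiagonal_succ_fst_mul_altConvTerm, sum_antidiagonal_succ_snd_mul_altConvTerm] at h
  push_cast at h
  linear_combination h - natCast_mul_altConv b s

theorem altConv_two_mul (b : R) (m : ℕ) : altConv b (2 * m) = multichoose b m := by
  induction m with
  | zero => simp [altConv, altConvTerm]
  | succ m ih =>
    have := BinomialRing.toIsAddTorsionFree (R := R)
    have h := altConv_add_two b (2 * m)
    push_cast at h
    refine (nsmul_right_inj (n := 2 * m + 2) (by omega)).mp ?_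
    rw [show 2 * (m + 1) = 2 * m + 2 by ring]
    simp only [nsmul_eq_mul]
    push_cast
    linear_combination h + (2 * b + 2 * m) * ih - 2 * succ_mul_multichoose_succ b m

theorem altConv_two_mul_add_one (b : R) (m : ℕ) : altConv b (2 * m + 1) = 0 := by
  induction m with
  | zero => simp [altConv, altConvTerm, Nat.sum_antidiagonal_succ]
  | succ m ih =>
    have := BinomialRing.toIsAddTorsionFree (R := R)
    have h := altConv_add_two b (2 * m + 1)
    push_cast at h
    refine (nsmul_right_inj (n := 2 * m + 3) (by omega)).mp ?_
    rw [show 2 * (m + 1) + 1 = 2 * m + 1 + 2 by ring]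
    simp only [nsmul_eq_mul, mul_zero]
    push_cast
    linear_combination h + (2 * b + 2 * m + 1) * ih

theorem sum_antidiagonal_neg_one_pow_mul_multichoose_sub_natCast (b : R) (j N : ℕ) :
    ∑ x ∈ antidiagonal N, (-1) ^ x.1 * multichoose (b - j) x.1 * multichoose b x.2 =
      ∑ x ∈ antidiagonal N, (j.choose x.1 : R) * altConv b x.2 := by
  have expand : ∀ i, (-1) ^ i * multichoose (b - j) i =
      ∑ y ∈ antidiagonal i, (j.choose y.1 : R) * ((-1) ^ y.2 * multichoose b y.2) := by
    intro i
    rw [sub_eq_neg_add, multichoose_add, mul_sum]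
    refine sum_congr rfl fun y hy => ?_
    have hsq : (-1 : R) ^ y.1 * (-1) ^ y.1 = 1 := by rw [← mul_pow]; norm_num
    rw [multichoose_neg_natCast, ← HasAntidiagonal.mem_antidiagonal.mp hy, pow_add]
    linear_combination (j.choose y.1 : R) * (-1) ^ y.2 * multichoose b y.2 * hsq
  calc _ = ∑ x ∈ antidiagonal N, ∑ y ∈ antidiagonal x.1,
          (j.choose y.1 : R) * ((-1) ^ y.2 * multichoose b y.2) * multichoose b x.2 := by
        simp only [expand, sum_mul]
    _ = ∑ x ∈ antidiagonal N, ∑ y ∈ antidiagonal x.2,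
          (j.choose x.1 : R) * ((-1) ^ y.1 * multichoose b y.1) * multichoose b y.2 :=
        Finset.Nat.sum_antidiagonal_sum_antidiagonal_fst N fun p q t =>
          (j.choose p : R) * ((-1) ^ q * multichoose b q) * multichoose b t
    _ = _ := by
        simp only [altConv, altConvTerm, mul_sum, mul_assoc]

theorem sum_antidiagonal_choose_mul_altConv (b : R) (j n : ℕ) :
    ∑ x ∈ antidiagonal (2 * n + 1), (j.choose x.1 : R) * altConv b x.2 =
      ∑ r ∈ range (n + 1), (j.choose (2 * r + 1) : R) * multichoose b (n - r) := by
  rw [Nat.sum_antidiagonal_eq_sum_range_succ (fun k l => (j.choose k : R) * altConv b l),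
    Nat.succ_eq_add_one, show 2 * n + 1 + 1 = 2 * (n + 1) by ring, sum_range_two_mul]
  refine sum_congr rfl fun r hr => ?_
  have hr : r ≤ n := Nat.lt_succ_iff.mp (mem_range.mp hr)
  rw [show 2 * n + 1 - 2 * r = 2 * (n - r) + 1 by omega,
    show 2 * n + 1 - (2 * r + 1) = 2 * (n - r) by omega, altConv_two_mul_add_one, altConv_two_mul,
    mul_zero, zero_add]

end BinomialRing

theorem poch_eq_factorial_mul_multichoose (x : ℂ) (k : ℕ) :
    poch x k = k.factorial * multichoose x k := by
  rw [poch, ← Polynomial.ascPochhammer_smeval_eq_eval,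
    ← factorial_nsmul_multichoose_eq_ascPochhammer, nsmul_eq_mul]

theorem poch_add (x : ℂ) (k m : ℕ) : poch x (k + m) = poch x k * poch (x + k) m := by
  simpa [poch, Polynomial.eval_comp] using
    congrArg (Polynomial.eval x) (ascPochhammer_mul ℂ k m).symm

theorem neg_one_pow_mul_poch_neg_natCast (n r : ℕ) :
    (-1) ^ r * poch (-(n : ℂ)) r = r.factorial * n.choose r := by
  have hsq : (-1 : ℂ) ^ r * (-1) ^ r = 1 := by rw [← mul_pow]; norm_num
  rw [poch_eq_factorial_mul_multichoose, multichoose_neg_natCast]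
  linear_combination (r.factorial * n.choose r : ℂ) * hsq

theorem two_pow_mul_poch_three_halves (n : ℕ) :
    (2 : ℂ) ^ (2 * n) * poch (3 / 2) n * n.factorial = (2 * n + 1).factorial := by
  induction n with
  | zero => simp [poch]
  | succ n ih =>
    rw [poch_add, show 2 * (n + 1) + 1 = 2 * n + 1 + 1 + 1 by ring, Nat.factorial_succ,
      Nat.factorial_succ, Nat.factorial_succ]
    push_cast [← ih]
    simp only [poch, ascPochhammer_one, Polynomial.eval_X]
    ring

theorem poch_neg_natCast_mul_div_eq (k l : ℕ) (a c z : ℂ) (hc : poch c (k + l) ≠ 0) :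
    poch (-((k + l : ℕ) : ℂ)) k * poch a k * z ^ k / (poch c k * k.factorial) =
      (k + l).factorial / poch c (k + l) *
        ((-z) ^ k * multichoose a k * multichoose (c + k) l) := by
  rw [poch_add] at hc ⊢
  obtain ⟨hck, hckl⟩ := mul_ne_zero_iff.mp hc
  rw [poch_eq_factorial_mul_multichoose (c + k)] at hckl ⊢
  obtain ⟨hlf, hM⟩ := mul_ne_zero_iff.mp hckl
  rw [poch_eq_factorial_mul_multichoose (-_), poch_eq_factorial_mul_multichoose a,
    multichoose_neg_natCast, ← Nat.choose_mul_factorial_mul_factorial (Nat.le_add_right k l),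
    Nat.add_sub_cancel_left]
  have hkf : (k.factorial : ℂ) ≠ 0 := Nat.cast_ne_zero.mpr k.factorial_ne_zero
  field_simp
  push_cast
  ring

theorem sum_range_poch_neg_natCast_eq (N : ℕ) (a c z : ℂ) (hc : poch c N ≠ 0) :
    ∑ k ∈ range (N + 1), poch (-(N : ℂ)) k * poch a k * z ^ k / (poch c k * k.factorial) =
      N.factorial / poch c N *
        ∑ x ∈ antidiagonal N, (1 - z) ^ x.1 * multichoose a x.1 * multichoose (c - a) x.2 := by
  rw [← sum_antidiagonal_neg_pow_mul_multichoose, mul_sum,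
    Nat.sum_antidiagonal_eq_sum_range_succ_mk]
  refine sum_congr rfl fun k hk => ?_
  obtain ⟨l, rfl⟩ := Nat.exists_eq_add_of_le (Nat.lt_succ_iff.mp (mem_range.mp hk))
  rw [Nat.add_sub_cancel_left]
  exact poch_neg_natCast_mul_div_eq k l a c z hc

theorem sum_range_neg_one_pow_mul_choose_mul_poch (b : ℂ) (j n : ℕ) :
    ∑ r ∈ range (j / 2 + 1),
        (-1 : ℂ) ^ r * (j.choose (2 * r + 1) : ℂ) * poch (-(n : ℂ)) r * poch b (n - r) =
      n.factorial * ∑ r ∈ range (n + 1), (j.choose (2 * r + 1) : ℂ) * multichoose b (n - r) := by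
  have hterm : ∀ r,
      (-1 : ℂ) ^ r * (j.choose (2 * r + 1) : ℂ) * poch (-(n : ℂ)) r * poch b (n - r) =
        j.choose (2 * r + 1) * (r.factorial * n.choose r * poch b (n - r)) := by
    intro r
    rw [← neg_one_pow_mul_poch_neg_natCast]
    ring
  simp only [hterm]
  -- the terms vanish both for `r > j / 2` and for `r > n`
  rw [← eventually_constant_sum (n := j / 2 + 1 + (n + 1)) _ (Nat.le_add_right _ _),
    eventually_constant_sum (N := n + 1) _ (Nat.le_add_left _ _), mul_sum]
  · refine sum_congr rfl fun r hr => ?_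
    have hr : r ≤ n := Nat.lt_succ_iff.mp (mem_range.mp hr)
    rw [poch_eq_factorial_mul_multichoose, ← Nat.choose_mul_factorial_mul_factorial hr]
    push_cast
    ring
  · intro r hr
    rw [Nat.choose_eq_zero_of_lt (by omega : n < r)]
    simp
  · intro r hr
    rw [Nat.choose_eq_zero_of_lt (by omega : j < 2 * r + 1)]
    simp

theorem twoF1_neg2np1_a_twoApj (n j : ℕ) (a : ℂ)
    (h : ∀ k ≤ 2 * n + 1, poch (2 * a + j) k ≠ 0) :
    ∑ k ∈ range (2 * n + 2),
        poch (-(2 * n : ℂ) - 1) k * poch a k * 2 ^ k /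
          (poch (2 * a + j) k * (k.factorial : ℂ))
      = (2 : ℂ) ^ (2 * n) * poch (3 / 2) n / poch (2 * a + j) (2 * n + 1) *
          ∑ r ∈ range (j / 2 + 1),
            (-1 : ℂ) ^ r * (j.choose (2 * r + 1) : ℂ) * poch (-(n : ℂ)) r *
              poch (a + j) (n - r) := by
  have hc := h (2 * n + 1) le_rfl
  have hN : -(2 * n : ℂ) - 1 = -((2 * n + 1 : ℕ) : ℂ) := by push_cast; ring
  calc _ = (2 * n + 1).factorial / poch (2 * a + j) (2 * n + 1) *
          ∑ x ∈ antidiagonal (2 * n + 1),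
            (-1) ^ x.1 * multichoose (a + j - j) x.1 * multichoose (a + j) x.2 := by
        rw [hN, sum_range_poch_neg_natCast_eq _ _ _ _ hc, add_sub_cancel_right,
          show (1 : ℂ) - 2 = -1 by norm_num, show 2 * a + j - a = a + j by ring]
    _ = (2 * n + 1).factorial / poch (2 * a + j) (2 * n + 1) *
          ∑ r ∈ range (n + 1), (j.choose (2 * r + 1) : ℂ) * multichoose (a + j) (n - r) := by
        rw [sum_antidiagonal_neg_one_pow_mul_multichoose_sub_natCast,
          sum_antidiagonal_choose_mul_altConv]
    _ = _ := by
        rw [sum_range_neg_one_pow_mul_choose_mul_poch, ← two_pow_mul_poch_three_halves]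
        field_simp
end
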